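/- arXiv:1302.1742 — 9 statements merged into one kernel-verified Lean document; each statement's English description precedes it below -/
import Mathlib

section
/- Let S be a discrete semigroup and φ a filter on S. The closed set C = { p ∈ βS : φ ⊆ p } (ultrafilters extending φ) is a subsemigroup of βS if and only if for every A ∈ φ and every ultrafilter p ⊇ φ one has Ω_p(A) := { s : s⁻¹A ∈ p } ∈ φ. -/
attribute [local instance] Ultrafilter.mul Ultrafilter.semigroup

theorem Ultrafilter.mem_mul_iff {M : Type*} [Mul M] (U V : Ultrafilter M) (A : Set M) :
    A ∈ U * V ↔ {s : M | {t : M | s * t ∈ A} ∈ V} ∈ U :=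
  Ultrafilter.eventually_mul U V (· ∈ A)

theorem closed_subsemigroup_iff_general {S : Type*} [Semigroup S] (φ : Filter S) :
    (∀ p q : Ultrafilter S, ↑p ≤ φ → ↑q ≤ φ → ↑(p * q) ≤ φ) ↔
      ∀ A : Set S, A ∈ φ → ∀ p : Ultrafilter S, ↑p ≤ φ →
        {s : S | {t : S | s * t ∈ A} ∈ p} ∈ φ := by
  constructor
  · intro hclosed A hA p hp
    rw [Filter.mem_iff_ultrafilter]
    intro q hq
    exact (Ultrafilter.mem_mul_iff q p A).mp (hclosed q p hq hp hA)
  · intro hΩ p q hp hq A hA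
    exact (Ultrafilter.mem_mul_iff p q A).mpr (hp (hΩ A hA q hq))

theorem closed_subsemigroup_iff {S : Type*} [Semigroup S] (φ : Filter S) [φ.NeBot] :
    (∀ p q : Ultrafilter S, ↑p ≤ φ → ↑q ≤ φ → ↑(p * q) ≤ φ) ↔
      ∀ A : Set S, A ∈ φ → ∀ p : Ultrafilter S, ↑p ≤ φ →
        {s : S | {t : S | s * t ∈ A} ∈ p} ∈ φ :=
  closed_subsemigroup_iff_general φ
end

section
/- Let S be a discrete semigroup and φ a proper filter on S. The closed set L = { p ∈ βS : φ ⊆ p } is a left ideal of βS if and only if φ is left thick, i.e., for every A ∈ φ and every s ∈ S, s⁻¹A ∈ φ. -/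
attribute [local instance] Ultrafilter.mul Ultrafilter.semigroup

theorem Ultrafilter.mem_pure_mul {S : Type*} [Mul S] (s : S) (p : Ultrafilter S) (A : Set S) :
    A ∈ pure s * p ↔ {t : S | s * t ∈ A} ∈ p :=
  Iff.rfl

theorem Ultrafilter.mem_mul_of_forall_mem {S : Type*} [Mul S] (q p : Ultrafilter S) (A : Set S)
    (h : ∀ s : S, {t : S | s * t ∈ A} ∈ p) : A ∈ q * p :=
  (Ultrafilter.eventually_mul q p (· ∈ A)).2 (.of_forall h)

theorem left_ideal_iff_left_thick_general {S : Type*} [Semigroup S] (φ : Filter S) :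
    (∀ q p : Ultrafilter S, ↑p ≤ φ → ↑(q * p) ≤ φ) ↔
      ∀ A : Set S, A ∈ φ → ∀ s : S, {t : S | s * t ∈ A} ∈ φ := by
  constructor
  · intro hideal A hA s
    refine Filter.mem_iff_ultrafilter.2 fun p hp => ?_
    exact (Ultrafilter.mem_pure_mul s p A).1 (hideal (pure s) p hp hA)
  · intro hthick q p hp A hA
    exact Ultrafilter.mem_mul_of_forall_mem q p A fun s => hp (hthick A hA s)

theorem left_ideal_iff_left_thick {S : Type*} [Semigroup S] (φ : Filter S) [φ.NeBot] :
    (∀ q p : Ultrafilter S, ↑p ≤ φ → ↑(q * p) ≤ φ) ↔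
      ∀ A : Set S, A ∈ φ → ∀ s : S, {t : S | s * t ∈ A} ∈ φ :=
  left_ideal_iff_left_thick_general φ
end

section
/- Let S be a discrete semigroup and let K denote the smallest two-sided ideal of βS. If an ultrafilter p belongs to K, then for every A ∈ p the set Ω_p(A) = { s ∈ S : s⁻¹A ∈ p } is syndetic, i.e., there exists a finite F ⊆ S with S = ⋃_{s∈F} s⁻¹Ω_p(A). -/
/-!
Write `B = Ω_p(A)`, so that `A ∈ r * p ↔ B ∈ r` for every ultrafilter `r`. If `B` is not
syndetic, the sets `{t | s * t ∉ B}` have the finite intersection property, so some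
ultrafilter `q` contains all of them, and then `B ∉ r * q` for every `r`. On the other hand
`p ∈ K` lies in a minimal left ideal, so `p = w * (q * p)` for some `w`; hence
`A ∈ (w * q) * p`, i.e. `B ∈ w * q`, a contradiction.
-/

attribute [local instance] Ultrafilter.mul Ultrafilter.semigroup

/-- `J` is a (nonempty) two-sided ideal of `βS`. -/
def IsIdealBS {S : Type*} [Semigroup S] (J : Set (Ultrafilter S)) : Prop :=
  J.Nonempty ∧ ∀ p ∈ J, ∀ q : Ultrafilter S, q * p ∈ J ∧ p * q ∈ J

/-- `K` is the smallest two-sided ideal of `βS`. -/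
def IsSmallestIdealBS {S : Type*} [Semigroup S] (K : Set (Ultrafilter S)) : Prop :=
  IsIdealBS K ∧ ∀ J : Set (Ultrafilter S), IsIdealBS J → K ⊆ J

/-- `B ⊆ S` is syndetic. -/
def SyndeticIn {S : Type*} [Semigroup S] (B : Set S) : Prop :=
  ∃ F : Finset S, ∀ t : S, ∃ s ∈ F, s * t ∈ B

/-- `A ⊆ S` is piecewise syndetic. -/
def PiecewiseSyndeticIn {S : Type*} [Semigroup S] (A : Set S) : Prop :=
  ∃ F : Finset S, ∀ G : Finset S,
    (⋂ s ∈ G, {t : S | ∃ u ∈ F, u * (s * t) ∈ A}).Nonempty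

section MinimalLeftIdeal

variable {M : Type*} [Semigroup M]

variable (M) in
/-- `y` lies in a minimal left ideal iff `y ∈ M * (z * y)` for every `z`, so this is the union
of the minimal left ideals of `M`. -/
def minimalLeftIdealUnion : Set M :=
  {y | ∀ z : M, ∃ w, w * (z * y) = y}

theorem mul_mem_minimalLeftIdealUnion_left {y : M} (hy : y ∈ minimalLeftIdealUnion M) (x : M) :
    x * y ∈ minimalLeftIdealUnion M := fun z ↦ by
  obtain ⟨w, hw⟩ := hy (z * x)
  exact ⟨x * w, by simp only [mul_assoc] at hw ⊢; rw [hw]⟩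

theorem mul_mem_minimalLeftIdealUnion_right {y : M} (hy : y ∈ minimalLeftIdealUnion M) (x : M) :
    y * x ∈ minimalLeftIdealUnion M := fun z ↦ by
  obtain ⟨w, hw⟩ := hy z
  exact ⟨w, by rw [← mul_assoc z, ← mul_assoc w, hw]⟩

/-- Zorn's lemma yields a minimal nonempty closed left ideal `L`; for `y ∈ L` and any `z`, the
closed left ideal `M * (z * y)` lies in `L`, hence equals it and contains `y`. -/
theorem nonempty_minimalLeftIdealUnion [Nonempty M] [TopologicalSpace M] [CompactSpace M]
    [T2Space M] (continuous_mul_const : ∀ r : M, Continuous (· * r)) :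
    (minimalLeftIdealUnion M).Nonempty := by
  let 𝒞 : Set (Set M) := {L | IsClosed L ∧ L.Nonempty ∧ ∀ y ∈ L, ∀ x : M, x * y ∈ L}
  have range_mem (y : M) : Set.range (· * y) ∈ 𝒞 :=
    ⟨(isCompact_range (continuous_mul_const y)).isClosed, Set.range_nonempty _,
      by rintro _ ⟨w, rfl⟩ x; exact ⟨x * w, mul_assoc x w y⟩⟩
  have chain_bound : ∀ c ⊆ 𝒞, IsChain (· ⊆ ·) c → c.Nonempty → ∃ lb ∈ 𝒞, ∀ L ∈ c, lb ⊆ L := by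
    intro c hc𝒞 hchain hc
    have : Nonempty c := hc.to_subtype
    refine ⟨⋂₀ c, ⟨isClosed_sInter fun L hL ↦ (hc𝒞 hL).1, ?_, ?_⟩,
      fun L hL ↦ Set.sInter_subset_of_mem hL⟩
    · exact IsCompact.nonempty_sInter_of_directed_nonempty_isCompact_isClosed
        (IsChain.directedOn (r := fun L L' : Set M ↦ L' ⊆ L) hchain.symm)
        (fun L hL ↦ (hc𝒞 hL).2.1) (fun L hL ↦ (hc𝒞 hL).1.isCompact) (fun L hL ↦ (hc𝒞 hL).1)
    · exact fun y hy x L hL ↦ (hc𝒞 hL).2.2 y (hy L hL) x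
  obtain ⟨L, -, hL⟩ := zorn_superset_nonempty 𝒞 chain_bound _ (range_mem (Classical.arbitrary M))
  obtain ⟨-, ⟨y, hy⟩, hL_ideal⟩ := hL.prop
  refine ⟨y, fun z ↦ ?_⟩
  have : Set.range (· * (z * y)) = L :=
    hL.eq_of_subset (range_mem _) (Set.range_subset_iff.2 fun w ↦ hL_ideal _ (hL_ideal y hy z) w)
  exact this.ge hy

end MinimalLeftIdeal

section Ultrafilter

variable {S : Type*} [Semigroup S]

theorem isIdealBS_minimalLeftIdealUnion [Nonempty S] :
    IsIdealBS (minimalLeftIdealUnion (Ultrafilter S)) :=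
  ⟨nonempty_minimalLeftIdealUnion Ultrafilter.continuous_mul_left, fun _ hy x ↦
    ⟨mul_mem_minimalLeftIdealUnion_left hy x, mul_mem_minimalLeftIdealUnion_right hy x⟩⟩

/-- The witness `q` is a cluster point of `t_F`, where `s * t_F ∉ B` for all `s ∈ F`. -/
theorem exists_ultrafilter_notMem_mul_of_not_syndeticIn {B : Set S} (hB : ¬SyndeticIn B) :
    ∃ q : Ultrafilter S, ∀ r : Ultrafilter S, B ∉ r * q := by
  simp only [SyndeticIn, not_exists, not_forall, not_and] at hB
  choose t ht using hB
  let q := Ultrafilter.of (Filter.map t Filter.atTop)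
  have compl_mem (s : S) : {u | s * u ∉ B} ∈ q :=
    Ultrafilter.of_le _ <| Filter.mem_map.2 <| Filter.mem_atTop_sets.2
      ⟨{s}, fun F hF ↦ ht F s (hF (Finset.mem_singleton_self s))⟩
  refine ⟨q, fun r hr ↦ ?_⟩
  obtain ⟨s, hs⟩ := Ultrafilter.nonempty_of_mem (s := {s | {u | s * u ∈ B} ∈ q}) hr
  exact Ultrafilter.compl_notMem_iff.2 hs (compl_mem s)

end Ultrafilter

theorem omega_syndetic_of_mem_smallest_ideal {S : Type*} [Semigroup S]
    (K : Set (Ultrafilter S)) (hK : IsSmallestIdealBS K)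
    (p : Ultrafilter S) (hp : p ∈ K) (A : Set S) (hA : A ∈ p) :
    SyndeticIn {s : S | {t : S | s * t ∈ A} ∈ p} := by
  by_contra hB
  obtain ⟨q, hq⟩ := exists_ultrafilter_notMem_mul_of_not_syndeticIn hB
  have : Nonempty S := ⟨(Ultrafilter.nonempty_of_mem hA).some⟩
  obtain ⟨w, hw⟩ := hK.2 _ isIdealBS_minimalLeftIdealUnion hp q
  rw [← hw, ← mul_assoc] at hA
  exact hq w hA
end

section
/- Let S be a discrete semigroup, K the smallest ideal of βS, and p an ultrafilter on S. If for every A ∈ p the set Ω_p(A) = { s : s⁻¹A ∈ p } is syndetic, then p ∈ (βS)·q·p for every q ∈ βS; in particular p ∈ K. -/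
attribute [local instance] Ultrafilter.mul Ultrafilter.semigroup

/-! The sets `{s | s⁻¹A ∈ q·p}`, `A ∈ p`, are nonempty because `Ω_p(A)` is syndetic
(some translate `s⁻¹Ω_p(A) = {t | s⁻¹A ∈ t·p}` lies in `q`), and they shrink with `A`, so some
ultrafilter `r` contains all of them; then `p ⊆ r·q·p`, i.e. `r·q·p = p`. Taking `q ∈ K` puts `p`
in the ideal `K`. -/

namespace Ultrafilter

theorem mem_mul_iff_s11 {M : Type*} [Mul M] {A : Set M} {U V : Ultrafilter M} :
    A ∈ U * V ↔ {s | (s * ·) ⁻¹' A ∈ V} ∈ U :=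
  eventually_mul U V (· ∈ A)

theorem preimage_mul_left_mem_mul_iff {S : Type*} [Semigroup S] {A : Set S} {s : S}
    {U V : Ultrafilter S} :
    (s * ·) ⁻¹' A ∈ U * V ↔ (s * ·) ⁻¹' {x | (x * ·) ⁻¹' A ∈ V} ∈ U := by
  simp only [mem_mul_iff_s11, Set.preimage_preimage, Set.preimage_ofPred_eq, mul_assoc]

theorem exists_mul_eq_of_exists_preimage_mem {M : Type*} [Mul M] {w p : Ultrafilter M}
    (h : ∀ A ∈ p, ∃ s, (s * ·) ⁻¹' A ∈ w) : ∃ r : Ultrafilter M, r * w = p := by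
  set D : Set M → Set M := fun A => {s | (s * ·) ⁻¹' A ∈ w}
  have hD : Monotone D := fun A B hAB _ hs => w.mem_of_superset hs (Set.preimage_mono hAB)
  have : ((p : Filter M).lift' D).NeBot := (Filter.lift'_neBot_iff hD).2 h
  obtain ⟨r, hr⟩ := exists_le ((p : Filter M).lift' D)
  exact ⟨r, coe_le_coe.1 fun A hA => mem_mul_iff_s11.2 (hr (Filter.mem_lift' hA))⟩

end Ultrafilter

theorem SyndeticIn.exists_preimage_mem {S : Type*} [Semigroup S] {B : Set S}
    (hB : SyndeticIn B) (q : Ultrafilter S) : ∃ s, (s * ·) ⁻¹' B ∈ q := by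
  obtain ⟨F, hF⟩ := hB
  have hcover : (⋃ s ∈ F, (s * ·) ⁻¹' B) ∈ q :=
    q.mem_of_superset Filter.univ_mem fun t _ =>
      let ⟨s, hsF, hs⟩ := hF t
      Set.mem_iUnion₂_of_mem hsF hs
  obtain ⟨s, -, hs⟩ := (Ultrafilter.finite_biUnion_mem_iff F.finite_toSet).1 hcover
  exact ⟨s, hs⟩

theorem mem_smallest_ideal_of_omega_syndetic {S : Type*} [Semigroup S]
    (K : Set (Ultrafilter S)) (hK : IsSmallestIdealBS K) (p : Ultrafilter S)
    (h : ∀ A : Set S, A ∈ p → SyndeticIn {s : S | {t : S | s * t ∈ A} ∈ p}) :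
    (∀ q : Ultrafilter S, ∃ r : Ultrafilter S, r * q * p = p) ∧ p ∈ K := by
  have hreturn (q : Ultrafilter S) : ∃ r : Ultrafilter S, r * q * p = p := by
    simp only [mul_assoc]
    refine Ultrafilter.exists_mul_eq_of_exists_preimage_mem fun A hA => ?_
    obtain ⟨s, hs⟩ := (h A hA).exists_preimage_mem q
    exact ⟨s, Ultrafilter.preimage_mul_left_mem_mul_iff.2 hs⟩
  refine ⟨hreturn, ?_⟩
  obtain ⟨⟨⟨k, hk⟩, hideal⟩, -⟩ := hK
  obtain ⟨r, hr⟩ := hreturn k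
  exact hr ▸ (hideal _ (hideal k hk r).1 p).2
end

section
/- Let S be a discrete semigroup and K the smallest ideal of βS. If A ⊆ S and there exists p ∈ K with A ∈ p, then A is piecewise syndetic: there exists a finite F ⊆ S such that the family { s⁻¹(⋃_{t∈F} t⁻¹A) : s ∈ S } has the finite intersection property. -/
attribute [local instance] Ultrafilter.mul Ultrafilter.semigroup

/-!
Minimal closed left ideals of `βS` exist by compactness, and their union is a two-sided ideal, so
it contains `p ∈ K`: `p` lies in such a minimal `L`. Minimality forces
`L = βS · x` for every `x ∈ L`; taking `x = q · p` gives `p = r · q · p` for every `q` and some `r`.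
Let `B = {s | s⁻¹A ∈ p}`. If `B` were not syndetic, the sets `{t | s t ∉ B}` would have the finite
intersection property and so lie in one ultrafilter `q`; but `A ∈ (r q) p` says `B ∈ r q`, so
`s⁻¹B ∈ q` for some `s`, a contradiction. A finite `F` witnessing that `B` is syndetic witnesses
that `A` is piecewise syndetic: given a finite `G`, pick `u_s ∈ F` with `u_s s ∈ B` for `s ∈ G`;
the finitely many sets `(u_s s)⁻¹A` all belong to `p`, so they meet.
-/

section ClosedLeftIdeal

variable {M : Type*} [Semigroup M] [TopologicalSpace M]

def IsClosedLeftIdeal (L : Set M) : Prop :=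
  L.Nonempty ∧ IsClosed L ∧ ∀ x ∈ L, ∀ r : M, r * x ∈ L

theorem exists_minimal_isClosedLeftIdeal_subset [CompactSpace M] {L₀ : Set M}
    (h : IsClosedLeftIdeal L₀) : ∃ L ⊆ L₀, Minimal IsClosedLeftIdeal L := by
  refine zorn_superset_nonempty {L | IsClosedLeftIdeal L} (fun c hc hchain ⟨L, hL⟩ => ?_) L₀ h
  have : Nonempty c := ⟨⟨L, hL⟩⟩
  have hne : (⋂₀ c).Nonempty :=
    IsCompact.nonempty_sInter_of_directed_nonempty_isCompact_isClosed
      (hchain.symm.directedOn (r := fun a b : Set M => a ⊇ b))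
      (fun L hL => (hc hL).1) (fun L hL => (hc hL).2.1.isCompact) (fun L hL => (hc hL).2.1)
  exact ⟨⋂₀ c, ⟨hne, isClosed_sInter fun L hL => (hc hL).2.1,
    fun x hx r L hL => (hc hL).2.2 x (hx L hL) r⟩, fun L hL => Set.sInter_subset_of_mem hL⟩

variable [CompactSpace M] [T2Space M]

theorem isClosedLeftIdeal_range_mul (hM : ∀ r : M, Continuous (· * r)) (x : M) :
    IsClosedLeftIdeal (Set.range (· * x)) := by
  refine ⟨⟨x * x, x, rfl⟩, (isCompact_range (hM x)).isClosed, ?_⟩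
  rintro _ ⟨y, rfl⟩ r
  exact ⟨r * y, mul_assoc r y x⟩

theorem range_mul_eq_of_minimal (hM : ∀ r : M, Continuous (· * r)) {L : Set M}
    (hL : Minimal IsClosedLeftIdeal L) {x : M} (hx : x ∈ L) : Set.range (· * x) = L := by
  have hsub : Set.range (· * x) ⊆ L := by
    rintro _ ⟨r, rfl⟩
    exact hL.1.2.2 x hx r
  exact hsub.antisymm (hL.2 (isClosedLeftIdeal_range_mul hM x) hsub)

theorem exists_mul_mul_eq_of_minimal (hM : ∀ r : M, Continuous (· * r)) {L : Set M}
    (hL : Minimal IsClosedLeftIdeal L) {x : M} (hx : x ∈ L) (q : M) : ∃ r, r * (q * x) = x := by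
  rw [← range_mul_eq_of_minimal hM hL (hL.1.2.2 x hx q)] at hx
  exact hx

theorem minimal_isClosedLeftIdeal_image_mul (hM : ∀ r : M, Continuous (· * r)) {L : Set M}
    (hL : Minimal IsClosedLeftIdeal L) (q : M) : Minimal IsClosedLeftIdeal ((· * q) '' L) := by
  refine ⟨⟨hL.1.1.image _, (hL.1.2.1.isCompact.image (hM q)).isClosed, ?_⟩, ?_⟩
  · rintro _ ⟨x, hx, rfl⟩ r
    exact ⟨r * x, hL.1.2.2 x hx r, mul_assoc r x q⟩
  rintro L' hL' hL'_sub
  obtain ⟨_, hxq⟩ := hL'.1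
  obtain ⟨x, hx, rfl⟩ := hL'_sub hxq
  -- the elements of `L` that `· * q` sends into `L'` form a closed left ideal, hence all of `L`
  have hT : IsClosedLeftIdeal (L ∩ (· * q) ⁻¹' L') := by
    refine ⟨⟨x, hx, hxq⟩, hL.1.2.1.inter (hL'.2.1.preimage (hM q)), ?_⟩
    rintro z ⟨hzL, hzL'⟩ r
    exact ⟨hL.1.2.2 z hzL r, by simpa only [Set.mem_preimage, mul_assoc] using hL'.2.2 _ hzL' r⟩
  rintro _ ⟨z, hz, rfl⟩
  exact (hL.2 hT Set.inter_subset_left hz).2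

end ClosedLeftIdeal

section Syndetic

variable {S : Type*} [Semigroup S]

theorem isIdealBS_setOf_mem_minimal_isClosedLeftIdeal [Nonempty (Ultrafilter S)] :
    IsIdealBS {p : Ultrafilter S | ∃ L, Minimal IsClosedLeftIdeal L ∧ p ∈ L} := by
  obtain ⟨x⟩ := ‹Nonempty (Ultrafilter S)›
  obtain ⟨L, -, hL⟩ := exists_minimal_isClosedLeftIdeal_subset
    (isClosedLeftIdeal_range_mul Ultrafilter.continuous_mul_left x)
  refine ⟨hL.1.1.imp fun p hp => ⟨L, hL, hp⟩, ?_⟩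
  rintro p ⟨L, hL, hp⟩ q
  exact ⟨⟨L, hL, hL.1.2.2 p hp q⟩,
    ⟨_, minimal_isClosedLeftIdeal_image_mul Ultrafilter.continuous_mul_left hL q, p, hp, rfl⟩⟩

theorem exists_mul_mul_eq_of_mem_smallestIdeal {K : Set (Ultrafilter S)}
    (hK : IsSmallestIdealBS K) {p : Ultrafilter S} (hp : p ∈ K) (q : Ultrafilter S) :
    ∃ r, r * (q * p) = p := by
  have : Nonempty (Ultrafilter S) := ⟨p⟩
  obtain ⟨L, hL, hpL⟩ := hK.2 _ isIdealBS_setOf_mem_minimal_isClosedLeftIdeal hp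
  exact exists_mul_mul_eq_of_minimal Ultrafilter.continuous_mul_left hL hpL q

theorem exists_ultrafilter_forall_of_not_syndeticIn {B : Set S} (hB : ¬SyndeticIn B) :
    ∃ q : Ultrafilter S, ∀ s, {t | s * t ∉ B} ∈ q := by
  simp only [SyndeticIn, not_exists, not_forall, not_and] at hB
  have hfip : ∀ T : Finset (Set S), ↑T ⊆ Set.range (fun s => {t | s * t ∉ B}) →
      (⋂₀ (T : Set (Set S))).Nonempty := by
    classical
    intro T hT
    rw [← Set.image_univ, Finset.subset_set_image_iff] at hT
    obtain ⟨F, -, rfl⟩ := hT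
    obtain ⟨t, ht⟩ := hB F
    exact ⟨t, by simpa using ht⟩
  obtain ⟨q, hq⟩ := Ultrafilter.exists_ultrafilter_of_finite_inter_nonempty _ hfip
  exact ⟨q, fun s => hq ⟨s, rfl⟩⟩

theorem syndeticIn_setOf_preimage_mem {p : Ultrafilter S} (hp : ∀ q, ∃ r, r * (q * p) = p)
    {A : Set S} (hA : A ∈ p) : SyndeticIn {s | {t | s * t ∈ A} ∈ p} := by
  set B := {s | {t | s * t ∈ A} ∈ p}
  by_contra hB
  obtain ⟨q, hq⟩ := exists_ultrafilter_forall_of_not_syndeticIn hB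
  obtain ⟨r, hr⟩ := hp q
  have hBr : {s | {t | s * t ∈ B} ∈ q} ∈ r := by
    have : A ∈ r * q * p := by rwa [mul_assoc, hr]
    exact this
  obtain ⟨s, hs : {t | s * t ∈ B} ∈ q⟩ := Ultrafilter.nonempty_of_mem hBr
  obtain ⟨t, hsB, hsB'⟩ := Ultrafilter.nonempty_of_mem (Filter.inter_mem hs (hq s))
  exact hsB' hsB

theorem piecewiseSyndeticIn_of_syndeticIn_setOf_preimage_mem
    (f : Filter S) [f.NeBot] {A : Set S} (h : SyndeticIn {s | {t | s * t ∈ A} ∈ f}) :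
    PiecewiseSyndeticIn A := by
  obtain ⟨F, hF⟩ := h
  choose u huF hu using hF
  refine ⟨F, fun G => ?_⟩
  obtain ⟨t, ht⟩ := Filter.nonempty_of_mem <|
    (Filter.biInter_finset_mem G).mpr fun s (_ : s ∈ G) => hu s
  refine ⟨t, Set.mem_iInter₂.mpr fun s hs => ⟨u s, huF s, ?_⟩⟩
  rw [← mul_assoc]
  exact Set.mem_iInter₂.mp ht s hs

end Syndetic

theorem piecewise_syndetic_of_mem_smallest_ideal {S : Type*} [Semigroup S]
    (K : Set (Ultrafilter S)) (hK : IsSmallestIdealBS K) (A : Set S)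
    (h : ∃ p ∈ K, A ∈ p) :
    PiecewiseSyndeticIn A := by
  obtain ⟨p, hpK, hAp⟩ := h
  exact piecewiseSyndeticIn_of_syndeticIn_setOf_preimage_mem p
    (syndeticIn_setOf_preimage_mem (exists_mul_mul_eq_of_mem_smallestIdeal hK hpK) hAp)
end

section
/- Let S be a discrete semigroup and K the smallest ideal of βS. If A ⊆ S is piecewise syndetic, then the closure of { p ∈ βS : A ∈ p } meets K; equivalently, there exists p ∈ K with A ∈ p. -/
/-!
Piecewise syndeticity of `A`, witnessed by `F`, says exactly that the sets
`s⁻¹B` with `B = ⋃_{u ∈ F} u⁻¹A` have the finite intersection property, so a single ultrafilter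
`q` contains all of them. Then `B ∈ p * q` for every `p`; taking `p` in the ideal `K` and using
that `F` is finite, some `u⁻¹A` belongs to `p * q ∈ K`, hence `A ∈ pure u * (p * q) ∈ K`.
-/

attribute [local instance] Ultrafilter.mul Ultrafilter.semigroup

open Filter

theorem Ultrafilter.exists_forall_mem_of_biInter_nonempty {ι α : Type*} (T : ι → Set α)
    (hT : ∀ G : Finset ι, (⋂ i ∈ G, T i).Nonempty) : ∃ q : Ultrafilter α, ∀ i, T i ∈ q := by
  classical
  let f : Filter α := ⨅ G : Finset ι, 𝓟 (⋂ i ∈ G, T i)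
  have hdir : Directed (· ≥ ·) fun G : Finset ι => 𝓟 (⋂ i ∈ G, T i) := fun G₁ G₂ =>
    ⟨G₁ ∪ G₂, principal_mono.2 (Set.biInter_subset_biInter_left Finset.subset_union_left),
      principal_mono.2 (Set.biInter_subset_biInter_left Finset.subset_union_right)⟩
  have : f.NeBot := iInf_neBot_of_directed' hdir fun G => principal_neBot_iff.2 (hT G)
  refine ⟨Ultrafilter.of f, fun i => Ultrafilter.of_le f ?_⟩
  exact mem_iInf_of_mem {i} (by simp)

section

variable {M : Type*} [Mul M]

theorem Ultrafilter.mem_mul_of_forall_preimage_mem {B : Set M} (p q : Ultrafilter M)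
    (h : ∀ m, (m * ·) ⁻¹' B ∈ q) : B ∈ p * q :=
  (Ultrafilter.eventually_mul p q (· ∈ B)).2 (Eventually.of_forall h)

theorem Ultrafilter.mem_pure_mul_iff {B : Set M} (u : M) (r : Ultrafilter M) :
    B ∈ pure u * r ↔ (u * ·) ⁻¹' B ∈ r :=
  Ultrafilter.eventually_mul (pure u) r (· ∈ B)

end

theorem PiecewiseSyndeticIn.exists_ultrafilter {S : Type*} [Semigroup S] {A : Set S}
    (h : PiecewiseSyndeticIn A) :
    ∃ F : Finset S, ∃ q : Ultrafilter S, ∀ s, (s * ·) ⁻¹' ⋃ u ∈ F, (u * ·) ⁻¹' A ∈ q := by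
  obtain ⟨F, hF⟩ := h
  refine ⟨F, Ultrafilter.exists_forall_mem_of_biInter_nonempty _ fun G => ?_⟩
  simpa [mul_assoc] using hF G

theorem IsIdealBS.exists_mem_of_piecewiseSyndeticIn {S : Type*} [Semigroup S]
    {J : Set (Ultrafilter S)} (hJ : IsIdealBS J) {A : Set S} (h : PiecewiseSyndeticIn A) :
    ∃ p ∈ J, A ∈ p := by
  obtain ⟨⟨p, hp⟩, hideal⟩ := hJ
  obtain ⟨F, q, hq⟩ := h.exists_ultrafilter
  have hpq : p * q ∈ J := (hideal p hp q).2
  obtain ⟨u, -, hu⟩ := (Ultrafilter.finite_biUnion_mem_iff F.finite_toSet).1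
    (Ultrafilter.mem_mul_of_forall_preimage_mem p q hq)
  exact ⟨pure u * (p * q), (hideal _ hpq (pure u)).1, (Ultrafilter.mem_pure_mul_iff u _).2 hu⟩

theorem smallest_ideal_meets_of_piecewise_syndetic {S : Type*} [Semigroup S]
    (K : Set (Ultrafilter S)) (hK : IsSmallestIdealBS K) (A : Set S)
    (h : PiecewiseSyndeticIn A) :
    ∃ p ∈ K, A ∈ p :=
  hK.1.exists_mem_of_piecewiseSyndeticIn h
end

section
/- Let S be a discrete semigroup and A ⊆ S. If there exists p in the smallest ideal K of βS with A ∈ p, then the set C = { s ∈ S : s⁻¹A is central } is syndetic, where B ⊆ S is central if B ∈ e for some idempotent e ∈ K. -/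
/-
The union of the minimal left ideals of `βS` is a two-sided ideal, so an element `p` of the
smallest ideal lies in a minimal left ideal `L = βS * p`. By Ellis' theorem `L` contains an
idempotent `e`, which is then in `K`. For every `q ∈ βS` the element `q * e` lies in `L`, so by
minimality `p = r * q * e` for some `r`. Unwinding `A ∈ r * q * e` gives `s ∈ S` with `s * t ∈ C`
for `q`-almost all `t`, witnessed by `e`. Thus every ultrafilter contains a translate `s⁻¹ C`, and
compactness of `βS` turns this into finitely many translates covering `S`.
-/

attribute [local instance] Ultrafilter.mul Ultrafilter.semigroup

namespace Ultrafilter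

variable {S : Type*} [Semigroup S]

def principalLeftIdeal (x : Ultrafilter S) : Set (Ultrafilter S) :=
  Set.range (· * x)

theorem mul_mem_principalLeftIdeal (q x : Ultrafilter S) : q * x ∈ principalLeftIdeal x :=
  ⟨q, rfl⟩

theorem isCompact_principalLeftIdeal (x : Ultrafilter S) : IsCompact (principalLeftIdeal x) :=
  isCompact_range (continuous_mul_left x)

theorem principalLeftIdeal_nonempty (x : Ultrafilter S) : (principalLeftIdeal x).Nonempty :=
  ⟨x * x, mul_mem_principalLeftIdeal x x⟩

theorem principalLeftIdeal_subset {x y : Ultrafilter S} (hy : y ∈ principalLeftIdeal x) :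
    principalLeftIdeal y ⊆ principalLeftIdeal x := by
  rintro _ ⟨r, rfl⟩
  obtain ⟨s, rfl⟩ := hy
  exact ⟨r * s, mul_assoc r s x⟩

theorem principalLeftIdeal_mul_subset (x a : Ultrafilter S) :
    (· * a) '' principalLeftIdeal x ⊆ principalLeftIdeal (x * a) := by
  rintro _ ⟨_, ⟨r, rfl⟩, rfl⟩
  exact ⟨r, (mul_assoc r x a).symm⟩

/-- `βS * x` is a minimal left ideal; testing only principal left ideals suffices, since every
left ideal contains one. -/
def IsMinimalPrincipal (x : Ultrafilter S) : Prop :=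
  ∀ y ∈ principalLeftIdeal x, principalLeftIdeal y = principalLeftIdeal x

theorem exists_isMinimalPrincipal [Nonempty S] : ∃ x : Ultrafilter S, IsMinimalPrincipal x := by
  have chain_bound : ∀ c ⊆ Set.range (principalLeftIdeal (S := S)), IsChain (· ⊆ ·) c →
      c.Nonempty → ∃ lb ∈ Set.range principalLeftIdeal, ∀ U ∈ c, lb ⊆ U := by
    intro c hc hchain ⟨m₀, hm₀⟩
    have : Nonempty c := ⟨⟨m₀, hm₀⟩⟩
    obtain ⟨y, hy⟩ : (⋂₀ c).Nonempty := by
      apply IsCompact.nonempty_sInter_of_directed_nonempty_isCompact_isClosed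
        (hchain.symm.directedOn (r := fun U V : Set _ => U ⊇ V))
      all_goals
        intro U hU
        obtain ⟨x, rfl⟩ := hc hU
      · exact principalLeftIdeal_nonempty x
      · exact isCompact_principalLeftIdeal x
      · exact (isCompact_principalLeftIdeal x).isClosed
    refine ⟨principalLeftIdeal y, ⟨y, rfl⟩, fun U hU => ?_⟩
    obtain ⟨x, rfl⟩ := hc hU
    exact principalLeftIdeal_subset (hy _ hU)
  obtain ⟨m, -, hm⟩ := zorn_superset_nonempty _ chain_bound _ ⟨Classical.arbitrary _, rfl⟩
  obtain ⟨x, rfl⟩ := hm.prop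
  exact ⟨x, fun y hy => hm.eq_of_subset ⟨y, rfl⟩ (principalLeftIdeal_subset hy)⟩

theorem IsMinimalPrincipal.of_mem {x y : Ultrafilter S} (hx : IsMinimalPrincipal x)
    (hy : y ∈ principalLeftIdeal x) : IsMinimalPrincipal y := by
  intro z hz
  rw [hx y hy] at hz ⊢
  exact hx z hz

/-- Right translation by `a` maps the minimal left ideal `βS * x` onto `βS * (x * a)`. -/
theorem IsMinimalPrincipal.mul_right {x : Ultrafilter S} (hx : IsMinimalPrincipal x)
    (a : Ultrafilter S) : IsMinimalPrincipal (x * a) := by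
  rintro _ ⟨r, rfl⟩
  refine (principalLeftIdeal_subset ⟨r, rfl⟩).antisymm ?_
  have hrx : principalLeftIdeal (r * x) = principalLeftIdeal x :=
    hx _ (mul_mem_principalLeftIdeal r x)
  calc principalLeftIdeal (x * a) ⊆ (· * a) '' principalLeftIdeal x := by
        rintro _ ⟨s, rfl⟩
        exact ⟨s * x, ⟨s, rfl⟩, mul_assoc s x a⟩
    _ = (· * a) '' principalLeftIdeal (r * x) := by rw [hrx]
    _ ⊆ principalLeftIdeal (r * x * a) := principalLeftIdeal_mul_subset _ a
    _ = principalLeftIdeal (r * (x * a)) := by rw [mul_assoc]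

theorem isIdealBS_setOf_mem_minimal [Nonempty S] :
    IsIdealBS {y : Ultrafilter S | ∃ x, IsMinimalPrincipal x ∧ y ∈ principalLeftIdeal x} := by
  obtain ⟨x₀, hx₀⟩ := exists_isMinimalPrincipal (S := S)
  refine ⟨⟨_, x₀, hx₀, principalLeftIdeal_nonempty x₀ |>.some_mem⟩, ?_⟩
  rintro _ ⟨x, hx, r, rfl⟩ q
  exact ⟨⟨x, hx, q * r, mul_assoc q r x⟩, ⟨x * q, hx.mul_right q, r, (mul_assoc r x q).symm⟩⟩

theorem IsMinimalPrincipal.mem_principalLeftIdeal_mul {p e : Ultrafilter S}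
    (hp : IsMinimalPrincipal p) (hpp : p ∈ principalLeftIdeal p) (he : e ∈ principalLeftIdeal p)
    (q : Ultrafilter S) : p ∈ principalLeftIdeal (q * e) := by
  rwa [hp _ (principalLeftIdeal_subset he (mul_mem_principalLeftIdeal q e))]

theorem _root_.IsSmallestIdealBS.isMinimalPrincipal_of_mem {K : Set (Ultrafilter S)}
    (hK : IsSmallestIdealBS K) {p : Ultrafilter S} (hp : p ∈ K) :
    IsMinimalPrincipal p ∧ p ∈ principalLeftIdeal p := by
  have : Nonempty S := Filter.nonempty_of_neBot (p : Filter S)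
  obtain ⟨x, hx, hpx⟩ := hK.2 _ isIdealBS_setOf_mem_minimal hp
  refine ⟨hx.of_mem hpx, ?_⟩
  rwa [hx p hpx]

theorem exists_idempotent_mem_principalLeftIdeal (p : Ultrafilter S) :
    ∃ e ∈ principalLeftIdeal p, e * e = e :=
  exists_idempotent_in_compact_subsemigroup continuous_mul_left _
    (principalLeftIdeal_nonempty p) (isCompact_principalLeftIdeal p)
    fun x _ _ hy => principalLeftIdeal_subset hy (mul_mem_principalLeftIdeal x _)

theorem exists_translate_mem_of_mem_mul {B : Set S} {r q : Ultrafilter S} (h : B ∈ r * q) :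
    ∃ s : S, {t : S | s * t ∈ B} ∈ q :=
  ((eventually_mul r q (· ∈ B)).mp h).exists

end Ultrafilter

theorem syndeticIn_of_forall_exists_translate_mem {S : Type*} [Semigroup S] {B : Set S}
    (h : ∀ q : Ultrafilter S, ∃ s : S, {t : S | s * t ∈ B} ∈ q) : SyndeticIn B := by
  obtain ⟨F, hF⟩ := isCompact_univ.elim_finite_subcover
    (fun s : S => {q : Ultrafilter S | {t : S | s * t ∈ B} ∈ q})
    (fun s => ultrafilter_isOpen_basic _)
    (fun q _ => Set.mem_iUnion.mpr (h q))
  refine ⟨F, fun t => ?_⟩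
  simpa using hF (Set.mem_univ (pure t))

theorem central_translates_syndetic {S : Type*} [Semigroup S]
    (K : Set (Ultrafilter S)) (hK : IsSmallestIdealBS K) (A : Set S)
    (h : ∃ p ∈ K, A ∈ p) :
    SyndeticIn {s : S | ∃ e : Ultrafilter S, e ∈ K ∧ e * e = e ∧ {t : S | s * t ∈ A} ∈ e} := by
  obtain ⟨p, hpK, hpA⟩ := h
  obtain ⟨hpmin, hpp⟩ := hK.isMinimalPrincipal_of_mem hpK
  obtain ⟨e, ⟨r₀, rfl⟩, he_idem⟩ := Ultrafilter.exists_idempotent_mem_principalLeftIdeal p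
  have heK : r₀ * p ∈ K := (hK.1.2 p hpK r₀).1
  apply syndeticIn_of_forall_exists_translate_mem
  intro q
  obtain ⟨r, hr⟩ := hpmin.mem_principalLeftIdeal_mul hpp ⟨r₀, rfl⟩ q
  have hA : {x : S | {u : S | x * u ∈ A} ∈ r₀ * p} ∈ r * q := by
    rw [← show r * (q * (r₀ * p)) = p from hr, ← mul_assoc] at hpA
    exact (Ultrafilter.eventually_mul _ _ _).mp hpA
  obtain ⟨s, hs⟩ := Ultrafilter.exists_translate_mem_of_mem_mul hA
  exact ⟨s, Filter.mem_of_superset hs fun t ht => ⟨_, heK, he_idem, by simpa [mul_assoc] using ht⟩⟩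
end

section
/- Let S be a discrete semigroup and A ⊆ S. If there exists s ∈ S such that s⁻¹A is central (i.e., s⁻¹A ∈ e for some idempotent e in the smallest ideal K of βS), then A is piecewise syndetic. -/
attribute [local instance] Ultrafilter.mul Ultrafilter.semigroup

/-!
If `p` lies in the smallest ideal of `βS`, then `p ∈ βS q p` for every `q`: minimal closed left
ideals exist by Zorn's lemma and compactness, and the points lying in one of them form a two-sided
ideal. Hence for `B ∈ p` the return set `T = {t | t⁻¹B ∈ p}` is syndetic: otherwise some
ultrafilter `q` avoids every `u⁻¹T`, while `B ∈ p = x q p` puts some `u⁻¹T` in `q`. A syndetic `T`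
makes `B` piecewise syndetic, since finitely many members `(vg)⁻¹B` of `p` have a common point, and
piecewise syndeticity passes from `s⁻¹A` to `A`.
-/

namespace Ultrafilter

theorem exists_forall_mem_of_finite_inter_nonempty {ι α : Type*} (C : ι → Set α)
    (h : ∀ F : Finset ι, (⋂ i ∈ F, C i).Nonempty) : ∃ q : Ultrafilter α, ∀ i, C i ∈ q := by
  classical
  obtain ⟨q, hq⟩ := exists_ultrafilter_of_finite_inter_nonempty (Set.range C) fun T hT => by
    rw [← Set.image_univ, Finset.subset_set_image_iff] at hT
    obtain ⟨F, -, rfl⟩ := hT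
    simpa only [Finset.coe_image, Set.sInter_image, Finset.set_biInter_coe] using h F
  exact ⟨q, fun i => hq (Set.mem_range_self i)⟩

variable {S : Type*} [Semigroup S]

def IsClosedLeftIdeal (L : Set (Ultrafilter S)) : Prop :=
  L.Nonempty ∧ IsClosed L ∧ ∀ p ∈ L, ∀ q : Ultrafilter S, q * p ∈ L

theorem isClosedLeftIdeal_range_mul_right (p : Ultrafilter S) :
    IsClosedLeftIdeal (Set.range (· * p)) :=
  ⟨⟨p * p, p, rfl⟩, (isCompact_range (continuous_mul_left p)).isClosed,
    by rintro _ ⟨x, rfl⟩ q; exact ⟨q * x, mul_assoc q x p⟩⟩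

theorem isClosedLeftIdeal_sInter_of_isChain {c : Set (Set (Ultrafilter S))}
    (hc : ∀ L ∈ c, IsClosedLeftIdeal L) (hchain : IsChain (· ⊆ ·) c) (hne : c.Nonempty) :
    IsClosedLeftIdeal (⋂₀ c) := by
  have : Nonempty c := hne.to_subtype
  refine ⟨?_, isClosed_sInter fun L hL => (hc L hL).2.1, fun p hp q L hL =>
    (hc L hL).2.2 p (Set.mem_sInter.1 hp L hL) q⟩
  exact IsCompact.nonempty_sInter_of_directed_nonempty_isCompact_isClosed
    (hchain.symm.directedOn (r := fun L M : Set (Ultrafilter S) => L ⊇ M))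
    (fun L hL => (hc L hL).1) (fun L hL => (hc L hL).2.1.isCompact) (fun L hL => (hc L hL).2.1)

theorem exists_minimal_isClosedLeftIdeal [Nonempty S] :
    ∃ L : Set (Ultrafilter S), Minimal IsClosedLeftIdeal L := by
  refine zorn_superset {L | IsClosedLeftIdeal L} fun c hc hchain => ?_
  rcases c.eq_empty_or_nonempty with rfl | hne
  · refine ⟨Set.univ, ⟨⟨pure (Classical.arbitrary S), trivial⟩, isClosed_univ, ?_⟩, by simp⟩
    exact fun _ _ _ => trivial
  · exact ⟨⋂₀ c, isClosedLeftIdeal_sInter_of_isChain hc hchain hne,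
      fun _ => Set.sInter_subset_of_mem⟩

/-- `p ∈ βS q p` for every `q`; equivalently, `βS p` is a minimal left ideal of `βS`. -/
def MemMinimalLeftIdeal (p : Ultrafilter S) : Prop :=
  ∀ q : Ultrafilter S, ∃ x, x * (q * p) = p

theorem memMinimalLeftIdeal_of_mem_of_minimal {L : Set (Ultrafilter S)}
    (hL : Minimal IsClosedLeftIdeal L) {p : Ultrafilter S} (hp : p ∈ L) :
    MemMinimalLeftIdeal p := by
  intro q
  have hsub : Set.range (· * (q * p)) ⊆ L := by
    rintro _ ⟨x, rfl⟩
    exact hL.1.2.2 _ (hL.1.2.2 p hp q) x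
  exact hL.2 (isClosedLeftIdeal_range_mul_right _) hsub hp

theorem isIdealBS_setOf_memMinimalLeftIdeal [Nonempty S] :
    IsIdealBS {p : Ultrafilter S | MemMinimalLeftIdeal p} := by
  refine ⟨?_, fun p hp r => ⟨fun q => ?_, fun q => ?_⟩⟩
  · obtain ⟨L, hL⟩ := exists_minimal_isClosedLeftIdeal (S := S)
    obtain ⟨p, hp⟩ := hL.1.1
    exact ⟨p, memMinimalLeftIdeal_of_mem_of_minimal hL hp⟩
  · obtain ⟨y, hy⟩ := hp (q * r)
    exact ⟨r * y, by rw [mul_assoc r y, ← mul_assoc q r p, hy]⟩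
  · obtain ⟨y, hy⟩ := hp q
    exact ⟨y, by rw [← mul_assoc q p r, ← mul_assoc y, hy]⟩

theorem memMinimalLeftIdeal_of_mem_smallest [Nonempty S] {K : Set (Ultrafilter S)}
    (hK : IsSmallestIdealBS K) {p : Ultrafilter S} (hp : p ∈ K) : MemMinimalLeftIdeal p :=
  hK.2 _ isIdealBS_setOf_memMinimalLeftIdeal hp

theorem MemMinimalLeftIdeal.syndeticIn_returns {p : Ultrafilter S} (hp : MemMinimalLeftIdeal p)
    {B : Set S} (hB : B ∈ p) : SyndeticIn {t : S | {w | t * w ∈ B} ∈ p} := by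
  by_contra hns
  have hfin : ∀ F : Finset S, ∃ t, ∀ u ∈ F, {w | u * (t * w) ∈ B} ∉ p := by
    simpa [SyndeticIn, mul_assoc] using hns
  obtain ⟨q, hq⟩ := exists_forall_mem_of_finite_inter_nonempty
    (fun u : S => {t : S | {w | u * (t * w) ∈ B} ∈ p}ᶜ) fun F =>
      let ⟨t, ht⟩ := hfin F; ⟨t, Set.mem_iInter₂.2 ht⟩
  obtain ⟨x, hx⟩ := hp q
  have hB' : {u : S | {c | u * c ∈ B} ∈ q * p} ∈ x := by
    rw [← hx] at hB
    exact hB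
  obtain ⟨u, hu⟩ := Ultrafilter.nonempty_of_mem hB'
  exact compl_mem_iff_notMem.1 (hq u) hu

end Ultrafilter

theorem piecewiseSyndeticIn_of_syndeticIn_returns {S : Type*} [Semigroup S] {p : Ultrafilter S}
    {B : Set S} (h : SyndeticIn {t : S | {w | t * w ∈ B} ∈ p}) : PiecewiseSyndeticIn B := by
  obtain ⟨F, hF⟩ := h
  choose v hvF hv using hF
  refine ⟨F, fun G => ?_⟩
  have hmem : (⋂ g ∈ G, {w | v g * g * w ∈ B}) ∈ p :=
    (Filter.biInter_finset_mem G).2 fun g _ => hv g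
  obtain ⟨t, ht⟩ := Ultrafilter.nonempty_of_mem hmem
  exact ⟨t, Set.mem_iInter₂.2 fun g hg =>
    ⟨v g, hvF g, by simpa only [Set.mem_ofPred_eq, mul_assoc] using Set.mem_iInter₂.1 ht g hg⟩⟩

theorem PiecewiseSyndeticIn.of_preimage_mul_left {S : Type*} [Semigroup S] {A : Set S} (s : S)
    (h : PiecewiseSyndeticIn {t : S | s * t ∈ A}) : PiecewiseSyndeticIn A := by
  classical
  obtain ⟨F, hF⟩ := h
  refine ⟨F.image (s * ·), fun G => ?_⟩
  obtain ⟨t, ht⟩ := hF G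
  refine ⟨t, Set.mem_iInter₂.2 fun g hg => ?_⟩
  obtain ⟨u, hu, hA⟩ := Set.mem_iInter₂.1 ht g hg
  exact ⟨s * u, Finset.mem_image_of_mem _ hu,
    by simpa only [Set.mem_ofPred_eq, mul_assoc] using hA⟩

theorem piecewise_syndetic_of_central_translate {S : Type*} [Semigroup S]
    (K : Set (Ultrafilter S)) (hK : IsSmallestIdealBS K) (A : Set S)
    (h : ∃ s : S, ∃ e : Ultrafilter S, e ∈ K ∧ e * e = e ∧ {t : S | s * t ∈ A} ∈ e) :
    PiecewiseSyndeticIn A := by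
  obtain ⟨s, e, heK, -, hA⟩ := h
  have : Nonempty S := ⟨s⟩
  have hreturns := (Ultrafilter.memMinimalLeftIdeal_of_mem_smallest hK heK).syndeticIn_returns hA
  exact (piecewiseSyndeticIn_of_syndeticIn_returns hreturns).of_preimage_mul_left s
end

section
/- Let S be a discrete semigroup, p an ultrafilter on S belonging to the smallest ideal K of βS, and A ∈ p. Then there exist s ∈ S and an idempotent e ∈ K with s⁻¹A ∈ e; i.e., some translate s⁻¹A of A is central. -/
/-!
Every element `p` of the smallest ideal `K` of `βS` lies in a minimal left ideal `L`: the union of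
the minimal left ideals (which exist by Zorn's lemma and compactness) is a two-sided ideal, so it
contains `K`. The compact semigroup `L = βS * p` contains an idempotent `e` (Ellis–Numakura), and
minimality gives `L * e = L`, hence `p * e = p`. As `L ∩ K` is a left ideal inside `L`, also
`e ∈ K`. Finally `A ∈ p * e` means that `s⁻¹A ∈ e` for `p`-many `s`, in particular for one.
-/

attribute [local instance] Ultrafilter.mul Ultrafilter.semigroup

open Set

section LeftIdeal

variable {M : Type*} [Semigroup M]

def IsLeftIdeal (L : Set M) : Prop :=
  L.Nonempty ∧ ∀ x ∈ L, ∀ q : M, q * x ∈ L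

theorem IsLeftIdeal.range_mul_right (x : M) : IsLeftIdeal (range (· * x)) := by
  refine ⟨⟨x * x, x, rfl⟩, ?_⟩
  rintro _ ⟨r, rfl⟩ q
  exact ⟨q * r, mul_assoc q r x⟩

theorem IsLeftIdeal.range_mul_right_subset {L : Set M} (hL : IsLeftIdeal L) {x : M}
    (hx : x ∈ L) : range (· * x) ⊆ L := by
  rintro _ ⟨q, rfl⟩
  exact hL.2 x hx q

theorem IsLeftIdeal.image_mul_right {L : Set M} (hL : IsLeftIdeal L) (q : M) :
    IsLeftIdeal ((· * q) '' L) := by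
  refine ⟨hL.1.image _, ?_⟩
  rintro _ ⟨x, hx, rfl⟩ w
  exact ⟨w * x, hL.2 x hx w, mul_assoc w x q⟩

theorem Minimal.range_mul_right_eq_of_isLeftIdeal {L : Set M} (hL : Minimal IsLeftIdeal L)
    {x : M} (hx : x ∈ L) : range (· * x) = L :=
  hL.eq_of_subset (.range_mul_right x) (hL.prop.range_mul_right_subset hx)

theorem Minimal.image_mul_right_of_isLeftIdeal {L : Set M} (hL : Minimal IsLeftIdeal L)
    (q : M) : Minimal IsLeftIdeal ((· * q) '' L) := by
  refine ⟨hL.prop.image_mul_right q, fun T hT hTL => ?_⟩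
  have hpre : IsLeftIdeal {x ∈ L | x * q ∈ T} := by
    obtain ⟨t, ht⟩ := hT.1
    obtain ⟨x, hx, rfl⟩ := hTL ht
    refine ⟨⟨x, hx, ht⟩, fun y ⟨hyL, hyT⟩ w => ⟨hL.prop.2 y hyL w, ?_⟩⟩
    simpa only [mul_assoc] using hT.2 _ hyT w
  rintro _ ⟨x, hx, rfl⟩
  rw [← hL.eq_of_subset hpre (sep_subset _ _)] at hx
  exact hx.2

theorem Minimal.mul_idempotent_eq_self_of_isLeftIdeal {L : Set M} (hL : Minimal IsLeftIdeal L)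
    {e : M} (he : e ∈ L) (hee : e * e = e) {x : M} (hx : x ∈ L) : x * e = x := by
  have hLe : (· * e) '' L = L := by
    refine hL.eq_of_subset (hL.prop.image_mul_right e) ?_
    rintro _ ⟨y, -, rfl⟩
    exact hL.prop.2 e he y
  rw [← hLe] at hx
  obtain ⟨y, -, rfl⟩ := hx
  rw [mul_assoc, hee]

theorem Minimal.subset_of_isLeftIdeal_of_mul_mem {L K : Set M} (hL : Minimal IsLeftIdeal L)
    (hK : IsLeftIdeal K) (hK_mul : ∀ k ∈ K, ∀ q : M, k * q ∈ K) : L ⊆ K := by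
  obtain ⟨x, hx⟩ := hL.prop.1
  obtain ⟨k, hk⟩ := hK.1
  have hLK : IsLeftIdeal (L ∩ K) :=
    ⟨⟨k * x, hL.prop.2 x hx k, hK_mul k hk x⟩,
      fun y hy q => ⟨hL.prop.2 y hy.1 q, hK.2 y hy.2 q⟩⟩
  rw [← hL.eq_of_subset hLK inter_subset_left]
  exact inter_subset_right

end LeftIdeal

section CompactRightTopological

variable {M : Type*} [Semigroup M] [TopologicalSpace M] [CompactSpace M]

theorem isLeftIdeal_sInter_of_isChain [Nonempty M] {c : Set (Set M)}
    (hc : ∀ C ∈ c, IsClosed C ∧ IsLeftIdeal C) (hchain : IsChain (· ⊆ ·) c) :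
    IsLeftIdeal (⋂₀ c) := by
  refine ⟨?_, fun x hx q => mem_sInter.2 fun C hC => (hc C hC).2.2 x (hx C hC) q⟩
  rcases c.eq_empty_or_nonempty with rfl | hne
  · simp
  have : Nonempty c := hne.to_subtype
  exact IsCompact.nonempty_sInter_of_directed_nonempty_isCompact_isClosed
    (IsChain.directedOn (r := fun C D : Set M => C ⊇ D) hchain.symm)
    (fun C hC => (hc C hC).2.1) (fun C hC => (hc C hC).1.isCompact) (fun C hC => (hc C hC).1)

variable [T2Space M] (hmul : ∀ r : M, Continuous (· * r))
include hmul

theorem exists_minimal_isLeftIdeal [Nonempty M] : ∃ L : Set M, Minimal IsLeftIdeal L := by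
  obtain ⟨C, hC⟩ := zorn_superset {C : Set M | IsClosed C ∧ IsLeftIdeal C} fun c hc hchain =>
    ⟨⋂₀ c, ⟨isClosed_sInter fun C hC => (hc hC).1, isLeftIdeal_sInter_of_isChain hc hchain⟩,
      fun _ => sInter_subset_of_mem⟩
  refine ⟨C, hC.prop.2, fun J hJ hJC => ?_⟩
  obtain ⟨y, hy⟩ := hJ.1
  -- `M * y` is a closed left ideal, so minimality among closed left ideals applies to it.
  have hyC : range (· * y) = C :=
    hC.eq_of_subset ⟨(isCompact_range (hmul y)).isClosed, .range_mul_right y⟩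
      ((hJ.range_mul_right_subset hy).trans hJC)
  exact hyC ▸ hJ.range_mul_right_subset hy

theorem Minimal.exists_idempotent_of_isLeftIdeal {L : Set M} (hL : Minimal IsLeftIdeal L) :
    ∃ e ∈ L, e * e = e := by
  obtain ⟨x, hx⟩ := hL.prop.1
  refine exists_idempotent_in_compact_subsemigroup hmul L hL.prop.1 ?_
    fun y _ z hz => hL.prop.2 z hz y
  rw [← hL.range_mul_right_eq_of_isLeftIdeal hx]
  exact isCompact_range (hmul x)

end CompactRightTopological

section StoneCech

variable {S : Type*} [Semigroup S]

theorem IsIdealBS.isLeftIdeal {K : Set (Ultrafilter S)} (hK : IsIdealBS K) : IsLeftIdeal K :=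
  ⟨hK.1, fun k hk q => (hK.2 k hk q).1⟩

theorem isIdealBS_sUnion_minimal_isLeftIdeal [Nonempty S] :
    IsIdealBS (⋃₀ {L : Set (Ultrafilter S) | Minimal IsLeftIdeal L}) := by
  refine ⟨?_, ?_⟩
  · obtain ⟨L, hL⟩ := exists_minimal_isLeftIdeal (M := Ultrafilter S)
      Ultrafilter.continuous_mul_left
    obtain ⟨x, hx⟩ := hL.prop.1
    exact ⟨x, L, hL, hx⟩
  · rintro r ⟨L, hL, hr⟩ q
    exact ⟨⟨L, hL, hL.prop.2 r hr q⟩, ⟨_, hL.image_mul_right_of_isLeftIdeal q, r, hr, rfl⟩⟩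

theorem Ultrafilter.exists_translate_mem_of_mem_mul_s19 {p e : Ultrafilter S} {A : Set S}
    (hA : A ∈ p * e) : ∃ s : S, {t : S | s * t ∈ A} ∈ e :=
  p.nonempty_of_mem ((Ultrafilter.eventually_mul p e (· ∈ A)).1 hA)

end StoneCech

theorem exists_central_translate {S : Type*} [Semigroup S]
    (K : Set (Ultrafilter S)) (hK : IsSmallestIdealBS K)
    (p : Ultrafilter S) (hp : p ∈ K) (A : Set S) (hA : A ∈ p) :
    ∃ s : S, ∃ e : Ultrafilter S, e ∈ K ∧ e * e = e ∧ {t : S | s * t ∈ A} ∈ e := by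
  have : Nonempty S := ⟨(p.nonempty_of_mem hA).some⟩
  obtain ⟨L, hL, hpL⟩ := hK.2 _ isIdealBS_sUnion_minimal_isLeftIdeal hp
  obtain ⟨e, heL, hee⟩ := hL.exists_idempotent_of_isLeftIdeal Ultrafilter.continuous_mul_left
  have hpe : p * e = p := hL.mul_idempotent_eq_self_of_isLeftIdeal heL hee hpL
  obtain ⟨s, hs⟩ := Ultrafilter.exists_translate_mem_of_mem_mul_s19 (hpe.symm ▸ hA)
  have hLK : L ⊆ K :=
    hL.subset_of_isLeftIdeal_of_mul_mem hK.1.isLeftIdeal fun k hk q => (hK.1.2 k hk q).2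
  exact ⟨s, e, hLK heL, hee, hs⟩
end
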